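/- arXiv:math/0509711 — 3 statements merged into one kernel-verified Lean document; each statement's English description precedes it below -/
import Mathlib

section
/- Let μ, r ∈ ℝ, σ > 0, 0 < p < 1, T > 0, and set ρ = p(μ-r)²/(2σ²(1-p)) + rp. Then the function φ(t) = exp(ρ(T - t)) is the unique solution on [0,T] of the linear ODE φ'(t) + ρφ(t) = 0 with terminal condition φ(T) = 1, and consequently v(t,x) = exp(ρ(T-t))x^p satisfies ∂v/∂t(t,x) + sup_{a∈ℝ}[x(r + (μ-r)a)∂v/∂x(t,x) + (1/2)x²σ²a² ∂²v/∂x²(t,x)] = 0 for all t ∈ [0,T), x > 0, with v(T,x) = x^p. -/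
theorem quad_sSup (c₂ c₁ c₀ : ℝ) (h : c₂ < 0) :
    sSup (Set.range fun a : ℝ => c₂*a^2 + c₁*a + c₀) = c₀ - c₁^2/(4*c₂) := by
  have hne : c₂ ≠ 0 := h.ne
  refine IsGreatest.csSup_eq ⟨⟨-c₁/(2*c₂), ?_⟩, ?_⟩
  · field_simp
    ring
  · rintro y ⟨a, rfl⟩
    have h4 : (4*c₂) * (c₁^2/(4*c₂)) = c₁^2 := by field_simp
    nlinarith [sq_nonneg (2*c₂*a + c₁)]

/-- Explicit smooth solution of the Merton HJB equation. -/
theorem merton_hjb_solution (μ r σ p T : ℝ) (hσ : 0 < σ) (hp0 : 0 < p) (hp1 : p < 1)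
    (hT : 0 < T) :
    let ρ : ℝ := p * (μ - r)^2 / (2 * σ^2 * (1 - p)) + r * p
    let φ : ℝ → ℝ := fun t => Real.exp (ρ * (T - t))
    let v : ℝ → ℝ → ℝ := fun t x => Real.exp (ρ * (T - t)) * x ^ p
    ((∀ t ∈ Set.Icc (0:ℝ) T, HasDerivAt φ (-(ρ * φ t)) t) ∧ φ T = 1 ∧
      (∀ ψ : ℝ → ℝ, (∀ t ∈ Set.Icc (0:ℝ) T, HasDerivAt ψ (-(ρ * ψ t)) t) → ψ T = 1 →
        ∀ t ∈ Set.Icc (0:ℝ) T, ψ t = φ t)) ∧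
    (∀ t ∈ Set.Ico (0:ℝ) T, ∀ x > (0:ℝ),
      deriv (fun s => v s x) t +
        sSup (Set.range (fun a : ℝ =>
          x * (r + (μ - r) * a) * deriv (fun y => v t y) x +
            (1/2) * x^2 * σ^2 * a^2 * deriv (deriv (fun y => v t y)) x)) = 0) ∧
    (∀ x > (0:ℝ), v T x = x ^ p) := by
  intro ρ φ v
  have hφ' : ∀ t : ℝ, HasDerivAt φ (-(ρ * φ t)) t := by
    intro t
    have h1 : HasDerivAt (fun s : ℝ => ρ * (T - s)) (-ρ) t := by
      simpa using ((hasDerivAt_id t).const_sub T).const_mul ρ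
    simpa [φ, mul_comm] using h1.exp
  refine ⟨⟨fun t _ => hφ' t, by simp [φ], ?_⟩, ?_, ?_⟩
  · -- uniqueness
    intro ψ hψ hψT t ht
    set h : ℝ → ℝ := fun s => ψ s * Real.exp (ρ * s) with hh
    have hd : ∀ s ∈ Set.Icc (0:ℝ) T, HasDerivWithinAt h 0 (Set.Icc (0:ℝ) T) s := by
      intro s hs
      have he : HasDerivAt (fun u : ℝ => Real.exp (ρ * u)) (Real.exp (ρ * s) * ρ) s := by
        simpa using ((hasDerivAt_id s).const_mul ρ).exp
      have hds : HasDerivAt h (-(ρ * ψ s) * Real.exp (ρ * s) + ψ s * (Real.exp (ρ * s) * ρ)) s :=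
        (hψ s hs).mul he
      have h0 : -(ρ * ψ s) * Real.exp (ρ * s) + ψ s * (Real.exp (ρ * s) * ρ) = 0 := by ring
      exact (h0 ▸ hds).hasDerivWithinAt
    have hTm : T ∈ Set.Icc (0:ℝ) T := ⟨hT.le, le_rfl⟩
    have key : ‖h T - h t‖ ≤ 0 * ‖T - t‖ :=
      (convex_Icc (0:ℝ) T).norm_image_sub_le_of_norm_hasDerivWithin_le hd
        (fun s _ => by simp) ht hTm
    have heq : h t = h T := by
      have h1 : ‖h T - h t‖ ≤ 0 := by simpa using key
      have h2 := le_antisymm h1 (norm_nonneg _)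
      have h3 := sub_eq_zero.mp (norm_eq_zero.mp h2)
      linarith [h3]
    have hψt : ψ t * Real.exp (ρ * t) = Real.exp (ρ * T) := by
      simpa [hh, hψT] using heq
    have hexp : Real.exp (ρ * (T - t)) * Real.exp (ρ * t) = Real.exp (ρ * T) := by
      rw [← Real.exp_add]; ring_nf
    have hept : Real.exp (ρ * t) ≠ 0 := (Real.exp_pos _).ne'
    show ψ t = Real.exp (ρ * (T - t))
    have := hexp.trans hψt.symm
    exact (mul_right_cancel₀ hept this).symm
  · -- HJB
    intro t ht x hx
    have hxne : x ≠ 0 := hx.ne'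
    set E : ℝ := Real.exp (ρ * (T - t)) with hE
    have hEpos : 0 < E := Real.exp_pos _
    -- time derivative
    have hdt : deriv (fun s => v s x) t = -(ρ * E) * x ^ p :=
      ((hφ' t).mul_const (x ^ p)).deriv
    -- first space derivative
    have hd1 : HasDerivAt (fun y => v t y) (E * (p * x ^ (p-1))) x :=
      (Real.hasDerivAt_rpow_const (Or.inl hxne)).const_mul E
    have hder1 : deriv (fun y => v t y) x = E * (p * x ^ (p-1)) := hd1.deriv
    -- second space derivative
    have hev : deriv (fun y => v t y) =ᶠ[nhds x] fun y => E * (p * y ^ (p-1)) := by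
      filter_upwards [Ioi_mem_nhds hx] with y hy
      exact ((Real.hasDerivAt_rpow_const (Or.inl (ne_of_gt hy))).const_mul E).deriv
    have hd2 : HasDerivAt (fun y => E * (p * y ^ (p-1))) (E * (p * ((p-1) * x ^ (p-2)))) x := by
      have := ((Real.hasDerivAt_rpow_const (p := p-1) (Or.inl hxne)).const_mul p).const_mul E
      have he : p - 1 - 1 = p - 2 := by ring
      simpa [he, mul_assoc] using this
    have hder2 : deriv (deriv (fun y => v t y)) x = E * (p * ((p-1) * x ^ (p-2))) := by
      rw [hev.deriv_eq]
      exact hd2.deriv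
    rw [hdt, hder1, hder2]
    have hfun : (fun a : ℝ => x * (r + (μ - r) * a) * (E * (p * x ^ (p-1))) +
        (1/2) * x^2 * σ^2 * a^2 * (E * (p * ((p-1) * x ^ (p-2))))) =
        fun a : ℝ => ((1/2) * x^2 * σ^2 * (E * (p * ((p-1) * x ^ (p-2))))) * a^2 +
          (x * (μ - r) * (E * (p * x ^ (p-1)))) * a + (x * r * (E * (p * x ^ (p-1)))) := by
      funext a; ring
    have hxp2 : (0:ℝ) < x ^ (p-2) := Real.rpow_pos_of_pos hx _
    have hxp1 : (0:ℝ) < x ^ (p-1) := Real.rpow_pos_of_pos hx _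
    have hxpp : (0:ℝ) < x ^ p := Real.rpow_pos_of_pos hx _
    have hc2 : ((1/2) * x^2 * σ^2 * (E * (p * ((p-1) * x ^ (p-2))))) < 0 := by
      have h1 : (p-1) * x ^ (p-2) < 0 := mul_neg_of_neg_of_pos (by linarith) hxp2
      have h2 : E * (p * ((p-1) * x ^ (p-2))) < 0 :=
        mul_neg_of_pos_of_neg hEpos (mul_neg_of_pos_of_neg hp0 h1)
      have h3 : (0:ℝ) < (1/2) * x^2 * σ^2 := by positivity
      exact mul_neg_of_pos_of_neg h3 h2
    rw [hfun, quad_sSup _ _ _ hc2]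
    have e1 : x ^ (p-1) = x ^ p / x := by
      rw [Real.rpow_sub hx, Real.rpow_one]
    have e2 : x ^ (p-2) = x ^ p / x^2 := by
      rw [Real.rpow_sub hx, show (2:ℝ) = ((2:ℕ):ℝ) by norm_num, Real.rpow_natCast]
    rw [e1, e2]
    have hσne : σ ≠ 0 := hσ.ne'
    have hEne : E ≠ 0 := hEpos.ne'
    have hpne : p ≠ 0 := hp0.ne'
    have h1p : (1:ℝ) - p ≠ 0 := by linarith
    have hp1ne : p - 1 ≠ 0 := by linarith
    have hρ : ρ = p * (μ - r)^2 / (2 * σ^2 * (1 - p)) + r * p := rfl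
    rw [hρ]
    field_simp
    ring
  · intro x hx
    simp [v]
end

section
/- Let ρ > 0, β, γ, λ ∈ ℝ with γ ≠ 0, f̂ : (0,∞) → ℝ continuous, x_b > 0. Let v : (0,∞) → ℝ be C¹, concave, with v'(x) = λ on (0, x_b), C² on (x_b,∞) satisfying ρv(x) - βxv'(x) - (1/2)γ²x²v''(x) - f̂(x) = 0 there, and suppose ρv(x) - βλx - f̂(x) ≥ 0 for all x ∈ (0, x_b). If moreover the right second derivative v''(x_b⁺) = lim_{x↓x_b} v''(x) exists, then v''(x_b⁺) = 0; hence v is C² at x_b with v''(x_b) = 0. -/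
open Set Filter Topology

/-- Smooth-fit (C²) property at the free boundary of the one-dimensional convex singular
control problem. -/
theorem smooth_fit_second_derivative (ρ β γ lam xb : ℝ) (hρ : 0 < ρ) (hγ : γ ≠ 0)
    (hxb : 0 < xb)
    (f : ℝ → ℝ) (hf : ContinuousOn f (Set.Ioi 0))
    (v dv d2v : ℝ → ℝ)
    (hconc : ConcaveOn ℝ (Set.Ioi 0) v)
    (hC1 : ∀ x > (0:ℝ), HasDerivAt v (dv x) x)
    (hdvcont : ContinuousOn dv (Set.Ioi 0))
    (hflat : ∀ x ∈ Set.Ioo (0:ℝ) xb, dv x = lam)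
    (hode : ∀ x ∈ Set.Ioi xb, HasDerivAt dv (d2v x) x ∧
      ρ * v x - β * x * dv x - (1/2) * γ^2 * x^2 * d2v x - f x = 0)
    (hsub : ∀ x ∈ Set.Ioo (0:ℝ) xb, 0 ≤ ρ * v x - β * lam * x - f x)
    (L : ℝ) (hlim : Filter.Tendsto d2v (nhdsWithin xb (Set.Ioi xb)) (nhds L)) :
    L = 0 := by
  have hxb0 : xb ∈ Set.Ioi (0:ℝ) := hxb
  have hsub1 : Set.Ioo (0:ℝ) xb ⊆ Set.Ioi 0 := fun y hy => hy.1
  have hsub2 : Set.Ioi xb ⊆ Set.Ioi (0:ℝ) := fun y hy => hxb.trans hy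
  -- dv is antitone on Ioi 0
  have hanti : AntitoneOn dv (Set.Ioi 0) := by
    have h := hconc.antitoneOn_deriv (fun x hx => (hC1 x hx).differentiableAt)
    intro a ha b hb hab
    rw [← (hC1 a ha).deriv, ← (hC1 b hb).deriv]
    exact h ha hb hab
  -- Step 1 : L ≤ 0
  have hL_nonpos : L ≤ 0 := by
    refine le_of_tendsto hlim ?_
    filter_upwards [self_mem_nhdsWithin] with x hx
    have hx0 : (0:ℝ) < x := hxb.trans hx
    have hder := (hode x hx).1
    have ht : Filter.Tendsto (slope dv x) (nhdsWithin x (Set.Ioi x)) (nhds (d2v x)) :=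
      (hasDerivAt_iff_tendsto_slope.mp hder).mono_left
        (nhdsWithin_mono x (fun y hy => ne_of_gt hy))
    refine le_of_tendsto ht ?_
    filter_upwards [self_mem_nhdsWithin] with y hy
    have hy0 : (0:ℝ) < y := hx0.trans hy
    have hdvy : dv y ≤ dv x := hanti hx0 hy0 (le_of_lt hy)
    rw [slope_def_field]
    exact div_nonpos_of_nonpos_of_nonneg (by linarith) (by linarith [hy.out])
  have hc : (0:ℝ) < (1/2) * γ^2 * xb^2 := by positivity
  -- dv xb = lam
  have hneL : (nhdsWithin xb (Set.Ioo 0 xb)).NeBot := by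
    rw [← mem_closure_iff_nhdsWithin_neBot, closure_Ioo hxb.ne]
    exact ⟨le_of_lt hxb, le_refl xb⟩
  have hdvxb : dv xb = lam := by
    have h1 : Filter.Tendsto dv (nhdsWithin xb (Set.Ioo 0 xb)) (nhds (dv xb)) :=
      ((hdvcont xb hxb0).mono hsub1).tendsto
    refine tendsto_nhds_unique h1 ?_
    refine Filter.Tendsto.congr' ?_ tendsto_const_nhds
    filter_upwards [self_mem_nhdsWithin] with y hy
    exact (hflat y hy).symm
  -- continuity of v at xb
  have hvcont : ContinuousAt v xb := (hC1 xb hxb).continuousAt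
  -- Step 2 : ρ * v xb - β * lam * xb - f xb ≥ 0 by taking limit from the left in hsub
  have hg : 0 ≤ ρ * v xb - β * lam * xb - f xb := by
    have htend : Filter.Tendsto (fun x => ρ * v x - β * lam * x - f x)
        (nhdsWithin xb (Set.Ioo 0 xb)) (nhds (ρ * v xb - β * lam * xb - f xb)) := by
      apply Filter.Tendsto.sub
      apply Filter.Tendsto.sub
      · exact (hvcont.tendsto.mono_left nhdsWithin_le_nhds).const_mul ρ
      · exact (tendsto_id.mono_left nhdsWithin_le_nhds).const_mul (β * lam)
      · exact ((hf xb hxb0).mono hsub1).tendsto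
    refine ge_of_tendsto htend ?_
    filter_upwards [self_mem_nhdsWithin] with y hy
    exact hsub y hy
  -- Step 3 : L = (ρ * v xb - β * xb * lam - f xb) / ((1/2) * γ^2 * xb^2) ≥ 0
  have hL_eq : L = (ρ * v xb - β * lam * xb - f xb) / ((1/2) * γ^2 * xb^2) := by
    have htend : Filter.Tendsto
        (fun x => (ρ * v x - β * x * dv x - f x) / ((1/2) * γ^2 * x^2))
        (nhdsWithin xb (Set.Ioi xb))
        (nhds ((ρ * v xb - β * xb * dv xb - f xb) / ((1/2) * γ^2 * xb^2))) := by
      apply Filter.Tendsto.div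
      · apply Filter.Tendsto.sub
        apply Filter.Tendsto.sub
        · exact (hvcont.tendsto.mono_left nhdsWithin_le_nhds).const_mul ρ
        · have hid : Filter.Tendsto (fun x : ℝ => x) (nhdsWithin xb (Set.Ioi xb)) (nhds xb) :=
            tendsto_id.mono_left nhdsWithin_le_nhds
          have hdvt : Filter.Tendsto dv (nhdsWithin xb (Set.Ioi xb)) (nhds (dv xb)) :=
            ((hdvcont xb hxb0).mono hsub2).tendsto
          have := (hid.mul hdvt).const_mul β
          rw [← mul_assoc] at this
          exact this.congr (fun x => by ring)
        · exact ((hf xb hxb0).mono hsub2).tendsto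
      · have hid : Filter.Tendsto (fun x : ℝ => x) (nhdsWithin xb (Set.Ioi xb)) (nhds xb) :=
          tendsto_id.mono_left nhdsWithin_le_nhds
        exact ((hid.pow 2).const_mul ((1/2) * γ^2)).congr (fun x => by ring)
      · exact ne_of_gt hc
    have heq : Filter.Tendsto d2v (nhdsWithin xb (Set.Ioi xb))
        (nhds ((ρ * v xb - β * xb * dv xb - f xb) / ((1/2) * γ^2 * xb^2))) := by
      refine htend.congr' ?_
      filter_upwards [self_mem_nhdsWithin] with y hy
      have hy0 : (0:ℝ) < y := hxb.trans hy
      have heq := (hode y hy).2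
      have hy2 : (1/2) * γ^2 * y^2 ≠ 0 := by positivity
      field_simp
      linarith [heq]
    have hneR : (nhdsWithin xb (Set.Ioi xb)).NeBot := nhdsGT_neBot xb
    have := tendsto_nhds_unique hlim heq
    rw [this, hdvxb]
    ring_nf
  have hL_nonneg : 0 ≤ L := by
    rw [hL_eq]
    exact div_nonneg hg (le_of_lt hc)
  linarith
end

section
/- Let ψ : ℝⁿ → ℝ be C², x̄ ∈ ℝⁿ, T > 0, and for m ∈ ℕ let s_m ↑ T with s_m < T. Define φ_m(t,x) = ψ(x) - |x - x̄|⁴ + (T - t)/(T - s_m)². Let u : [0,T] × ℝⁿ → ℝ be lower semicontinuous, and let (t_m, x_m) minimize u - φ_m over [s_m, T] × B̄₁(x̄). Let v(x) = liminf_{t↑T, x'→x} u(t,x'). Suppose there exist y_m → x̄ with u(s_m, y_m) → v(x̄), and assume 0 = (v - ψ)(x̄) = min_{ℝⁿ}(v - ψ). Then for all sufficiently large m, t_m < T, and x_m → x̄ as m → ∞. -/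
open Filter

/-- A lower semicontinuous function is bounded below on a compact set. -/
lemma lsc_bddBelow_on_compact {α : Type*} [TopologicalSpace α] {f : α → ℝ}
    (hf : LowerSemicontinuous f) {K : Set α} (hK : IsCompact K) :
    ∃ C : ℝ, ∀ x ∈ K, C ≤ f x := by
  obtain ⟨t, -, hcover⟩ := hK.elim_nhds_subcover (fun x => {y | f x - 1 < f y})
    (fun x _ => by
      have := hf x (f x - 1) (by linarith)
      exact this)
  rcases t.eq_empty_or_nonempty with rfl | ht
  · refine ⟨0, fun x hx => ?_⟩
    have := hcover hx
    simp at this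
  · refine ⟨t.inf' ht (fun x => f x - 1), fun x hx => ?_⟩
    obtain ⟨i, hi, hxi⟩ := Set.mem_iUnion₂.mp (hcover hx)
    exact le_trans (Finset.inf'_le _ hi) (le_of_lt hxi)

/-- Localization lemma for the terminal condition of the HJB variational inequality:
the minimizers of u - φ_m stay strictly before the terminal time and converge to x̄. -/
theorem terminal_localization (n : ℕ) (T : ℝ) (hT : 0 < T)
    (ψ : EuclideanSpace ℝ (Fin n) → ℝ) (hψ : ContDiff ℝ 2 ψ)
    (xbar : EuclideanSpace ℝ (Fin n))
    (s : ℕ → ℝ) (hs : StrictMono s) (hsT : ∀ m, s m < T)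
    (hslim : Tendsto s atTop (nhds T))
    (u : ℝ × EuclideanSpace ℝ (Fin n) → ℝ) (hu : LowerSemicontinuous u)
    (t : ℕ → ℝ) (X : ℕ → EuclideanSpace ℝ (Fin n))
    (hmem : ∀ m, (t m, X m) ∈ Set.Icc (s m) T ×ˢ Metric.closedBall xbar 1)
    (hmin : ∀ m, ∀ p ∈ Set.Icc (s m) T ×ˢ Metric.closedBall xbar 1,
      u (t m, X m) - (ψ (X m) - ‖X m - xbar‖^4 + (T - t m)/(T - s m)^2)
        ≤ u p - (ψ p.2 - ‖p.2 - xbar‖^4 + (T - p.1)/(T - s m)^2))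
    (vlow : EuclideanSpace ℝ (Fin n) → ℝ)
    (hvlow : ∀ x, vlow x =
      liminf u (nhdsWithin (T, x) (Set.Iio T ×ˢ (Set.univ : Set (EuclideanSpace ℝ (Fin n))))))
    (y : ℕ → EuclideanSpace ℝ (Fin n)) (hy : Tendsto y atTop (nhds xbar))
    (hylim : Tendsto (fun m => u (s m, y m)) atTop (nhds (vlow xbar)))
    (htouch : vlow xbar = ψ xbar)
    (hminψ : ∀ x, vlow xbar - ψ xbar ≤ vlow x - ψ x) :
    (∃ N, ∀ m ≥ N, t m < T) ∧ Tendsto X atTop (nhds xbar) := by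
  have hTs : ∀ m, 0 < T - s m := fun m => sub_pos.mpr (hsT m)
  have hψc : Continuous ψ := hψ.continuous
  -- the comparison quantity R m
  set R : ℕ → ℝ := fun m => u (s m, y m) - ψ (y m) + ‖y m - xbar‖^4 with hRdef
  clear_value R
  -- R m → 0
  have hnorm4 : Tendsto (fun m => ‖y m - xbar‖^4) atTop (nhds 0) := by
    have hc : Continuous (fun x : EuclideanSpace ℝ (Fin n) => ‖x - xbar‖^4) :=
      (continuous_norm.comp (continuous_id.sub continuous_const)).pow 4
    have := (hc.tendsto xbar).comp hy
    simpa [Function.comp_def] using this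
  have hψy : Tendsto (fun m => ψ (y m)) atTop (nhds (ψ xbar)) := (hψc.tendsto xbar).comp hy
  have hR : Tendsto R atTop (nhds 0) := by
    rw [hRdef]
    have := (hylim.sub hψy).add hnorm4
    rw [htouch] at this
    simpa using this
  -- key inequality from minimality, comparing with (s m, y m)
  have key : ∀ m, y m ∈ Metric.closedBall xbar 1 →
      u (t m, X m) - ψ (X m) + ‖X m - xbar‖^4 - (T - t m)/(T - s m)^2
        ≤ R m - 1/(T - s m) := by
    intro m hym
    rw [hRdef]
    have h := hmin m (s m, y m) ⟨⟨le_refl _, (hsT m).le⟩, hym⟩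
    have hne : T - s m ≠ 0 := (hTs m).ne'
    have hEq : (T - s m)/(T - s m)^2 = 1/(T - s m) := by
      field_simp
    simp only [hEq] at h
    linarith [h]
  -- a fortiori inequality (the time-penalty term is at most 1/(T - s m))
  have key2 : ∀ m, y m ∈ Metric.closedBall xbar 1 →
      u (t m, X m) - ψ (X m) + ‖X m - xbar‖^4 ≤ R m := by
    intro m hym
    have h := key m hym
    have hpen : (T - t m)/(T - s m)^2 ≤ 1/(T - s m) := by
      have h1 : T - t m ≤ T - s m := by
        have := (hmem m).1.1; linarith
      have h2 : (0:ℝ) < (T - s m)^2 := pow_pos (hTs m) 2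
      rw [div_le_div_iff₀ h2 (hTs m)]
      calc (T - t m) * (T - s m) ≤ (T - s m) * (T - s m) := by
            have h3 : (0:ℝ) ≤ T - s m := (hTs m).le
            nlinarith [(hmem m).1.1, (hmem m).1.2]
        _ = 1 * (T - s m)^2 := by ring
    linarith
  -- lower bound for u - ψ on the compact set K
  have hK : IsCompact (Set.Icc (s 0) T ×ˢ Metric.closedBall xbar 1) :=
    isCompact_Icc.prod (isCompact_closedBall _ _)
  have hlsc : LowerSemicontinuous (fun p : ℝ × EuclideanSpace ℝ (Fin n) => u p - ψ (p.2)) := by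
    have hcont : Continuous (fun p : ℝ × EuclideanSpace ℝ (Fin n) => -ψ (p.2)) :=
      (hψc.comp continuous_snd).neg
    simpa [sub_eq_add_neg] using hu.add hcont.lowerSemicontinuous
  obtain ⟨C, hC⟩ := lsc_bddBelow_on_compact hlsc hK
  -- eventually y m is in the closed ball
  have hyball : ∀ᶠ m in atTop, y m ∈ Metric.closedBall xbar 1 :=
    hy (Metric.closedBall_mem_nhds xbar one_pos)
  -- 1/(T - s m) → ∞
  have hinv : Tendsto (fun m => 1/(T - s m)) atTop atTop := by
    have h0 : Tendsto (fun m => T - s m) atTop (nhdsWithin 0 (Set.Ioi 0)) := by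
      apply tendsto_nhdsWithin_of_tendsto_nhds_of_eventually_within
      · have := tendsto_const_nhds (x := T) (f := atTop (α := ℕ)) |>.sub hslim
        simpa using this
      · exact Eventually.of_forall fun m => hTs m
    simpa [one_div, Function.comp_def] using tendsto_inv_nhdsGT_zero.comp h0
  -- eventually R m - 1/(T - s m) < C
  have hRHS : ∀ᶠ m in atTop, R m - 1/(T - s m) < C := by
    have h1 : ∀ᶠ m in atTop, R m < 1 := hR.eventually_lt_const one_pos
    have h2 : ∀ᶠ m in atTop, 1 - C < 1/(T - s m) := hinv.eventually_gt_atTop (1 - C)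
    filter_upwards [h1, h2] with m hm1 hm2
    linarith
  -- Part 1 : eventually t m < T
  have hpart1 : ∀ᶠ m in atTop, t m < T := by
    filter_upwards [hyball, hRHS] with m hym hRm
    have hle : t m ≤ T := (hmem m).1.2
    rcases lt_or_eq_of_le hle with h | h
    · exact h
    · exfalso
      have hk := key m hym
      rw [h] at hk
      simp only [sub_self, zero_div] at hk
      have hXK : (t m, X m) ∈ Set.Icc (s 0) T ×ˢ Metric.closedBall xbar 1 := by
        refine ⟨⟨?_, (hmem m).1.2⟩, (hmem m).2⟩
        exact le_trans (hs.monotone (Nat.zero_le m)) (hmem m).1.1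
      have := hC _ hXK
      simp only at this
      rw [h] at this
      have hn : (0:ℝ) ≤ ‖X m - xbar‖^4 := by positivity
      linarith
  obtain ⟨N₁, hN₁⟩ := eventually_atTop.mp hpart1
  refine ⟨⟨N₁, hN₁⟩, ?_⟩
  -- Part 2 : X m → xbar
  by_contra hXnot
  rw [Metric.tendsto_atTop] at hXnot
  push_neg at hXnot
  obtain ⟨ε, hε, hfreq⟩ := hXnot
  obtain ⟨φ, hφmono, hφ⟩ := extraction_of_frequently_atTop
    (frequently_atTop.mpr fun N => by obtain ⟨n, hn, h⟩ := hfreq N; exact ⟨n, hn, h⟩)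
  -- extract a convergent subsequence of X ∘ φ
  obtain ⟨xhat, -, σ, hσmono, hσlim⟩ :=
    (isCompact_closedBall xbar 1).tendsto_subseq (fun k => (hmem (φ k)).2)
  set mseq : ℕ → ℕ := fun k => φ (σ k) with hmseq
  have hmmono : StrictMono mseq := hφmono.comp hσmono
  have hmtop : Tendsto mseq atTop atTop := hmmono.tendsto_atTop
  have hXseq : Tendsto (fun k => X (mseq k)) atTop (nhds xhat) := hσlim
  -- xhat is at distance ≥ ε from xbar
  have hdist : ε ≤ dist xhat xbar := by
    have hges : ∀ k, ε ≤ dist (X (mseq k)) xbar := fun k => hφ (σ k)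
    have hcont : Tendsto (fun k => dist (X (mseq k)) xbar) atTop (nhds (dist xhat xbar)) :=
      (Continuous.dist continuous_id continuous_const).continuousAt.tendsto.comp hXseq
    exact ge_of_tendsto hcont (Eventually.of_forall hges)
  set A : ℝ := ‖xhat - xbar‖^4 with hAdef
  have hApos : 0 < A := by
    have : (0:ℝ) < ‖xhat - xbar‖ := by
      rw [← dist_eq_norm]; linarith
    positivity
  -- t (mseq k) → T
  have htlim : Tendsto (fun k => t (mseq k)) atTop (nhds T) := by
    exact tendsto_of_tendsto_of_tendsto_of_le_of_le (hslim.comp hmtop) tendsto_const_nhds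
      (fun k => (hmem (mseq k)).1.1) (fun k => (hmem (mseq k)).1.2)
  -- the sequence (t (mseq k), X (mseq k)) tends to the one-sided filter at (T, xhat)
  set F : Filter (ℝ × EuclideanSpace ℝ (Fin n)) :=
    nhdsWithin (T, xhat) (Set.Iio T ×ˢ (Set.univ : Set (EuclideanSpace ℝ (Fin n)))) with hF
  have hseqF : Tendsto (fun k => (t (mseq k), X (mseq k))) atTop F := by
    apply tendsto_nhdsWithin_of_tendsto_nhds_of_eventually_within
    · exact htlim.prodMk_nhds hXseq
    · have : ∀ᶠ k in atTop, t (mseq k) < T := hmtop.eventually hpart1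
      filter_upwards [this] with k hk
      exact ⟨hk, Set.mem_univ _⟩
  -- the set defining the liminf
  set S : Set ℝ := {a | ∀ᶠ p in F, a ≤ u p} with hS
  have hvx : vlow xhat = sSup S := by
    rw [hvlow xhat, liminf_eq]
  -- S is nonempty by lower semicontinuity of u at (T, xhat)
  have hSne : S.Nonempty := by
    refine ⟨u (T, xhat) - 1, ?_⟩
    have := hu (T, xhat) (u (T, xhat) - 1) (by linarith)
    exact (this.filter_mono nhdsWithin_le_nhds).mono fun p hp => hp.le
  -- every element of S is at most ψ xhat - A/2
  have hSbound : ∀ a ∈ S, a ≤ ψ xhat - A/2 := by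
    intro a ha
    have h1 : ∀ᶠ k in atTop, a ≤ u (t (mseq k), X (mseq k)) :=
      hseqF.eventually ha
    have h2 : ∀ᶠ k in atTop, y (mseq k) ∈ Metric.closedBall xbar 1 := hmtop.eventually hyball
    -- upper bound B k := R (mseq k) + ψ (X (mseq k)) - ‖X (mseq k) - xbar‖^4
    have hB : Tendsto (fun k => R (mseq k) + ψ (X (mseq k)) - ‖X (mseq k) - xbar‖^4)
        atTop (nhds (0 + ψ xhat - A)) := by
      refine Tendsto.sub (Tendsto.add (hR.comp hmtop) ((hψc.tendsto xhat).comp hXseq)) ?_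
      have hc : Continuous (fun x : EuclideanSpace ℝ (Fin n) => ‖x - xbar‖^4) :=
        (continuous_norm.comp (continuous_id.sub continuous_const)).pow 4
      exact (hc.tendsto xhat).comp hXseq
    have h3 : ∀ᶠ k in atTop,
        R (mseq k) + ψ (X (mseq k)) - ‖X (mseq k) - xbar‖^4 < ψ xhat - A/2 := by
      apply hB.eventually_lt_const
      linarith
    obtain ⟨k, hk1, hk2, hk3⟩ := (h1.and (h2.and h3)).exists
    have hkey := key2 (mseq k) hk2
    linarith
  have hsup : sSup S ≤ ψ xhat - A/2 := csSup_le hSne hSbound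
  have hge : ψ xhat ≤ vlow xhat := by
    have := hminψ xhat
    rw [htouch] at this
    linarith
  rw [hvx] at hge
  linarith
end
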